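/- Let ω₁, ω₃ ∈ ℂ be ℝ-linearly independent, let Γ̃ = {4mω₁ + 4nω₃ : m, n ∈ ℤ}, and let H = (0 + Γ̃) ∪ (2ω₁ + Γ̃) ∪ (2ω₁ + 2ω₃ + Γ̃) ∪ (2ω₃ + Γ̃) be the set of half-period points. The set of holomorphic functions s on ℂ∖H such that s(z + γ) = s(z) for all γ ∈ Γ̃ and all z in the domain, and such that at every point q ∈ H the function s has at most a simple pole with vanishing constant Laurent term at q (i.e., there exists r ∈ ℂ with s(z) − r/(z − q) → 0 as z → q), is a complex vector space of dimension 3. -/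

import Mathlib

open Complex Filter Set Topology

/-- The lattice `Γ̃ = {4mω₁ + 4nω₃ : m, n ∈ ℤ}`. -/
def lat4 (ω₁ ω₃ : ℂ) : Set ℂ := {z | ∃ m n : ℤ, z = 4 * (m : ℂ) * ω₁ + 4 * (n : ℂ) * ω₃}

/-- The set `H` of the four half periods of `ℂ/Γ̃` together with all their
`Γ̃`-translates. -/
def Hset (ω₁ ω₃ : ℂ) : Set ℂ :=
  lat4 ω₁ ω₃ ∪ (fun γ => 2 * ω₁ + γ) '' lat4 ω₁ ω₃ ∪
    (fun γ => 2 * ω₁ + 2 * ω₃ + γ) '' lat4 ω₁ ω₃ ∪ (fun γ => 2 * ω₃ + γ) '' lat4 ω₁ ω₃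

/-- `s` is holomorphic away from `H`, `Γ̃`-periodic, and has at most a simple pole with
vanishing constant Laurent term at every point of `H`. -/
def CondEleven (ω₁ ω₃ : ℂ) (s : ℂ → ℂ) : Prop :=
  DifferentiableOn ℂ s (Hset ω₁ ω₃)ᶜ ∧
  (∀ z ∉ Hset ω₁ ω₃, ∀ γ ∈ lat4 ω₁ ω₃, s (z + γ) = s z) ∧
  ∀ q ∈ Hset ω₁ ω₃, ∃ r : ℂ,
    Tendsto (fun z => s z - r / (z - q)) (𝓝[≠] q) (𝓝 0)

/-!
Write `Λ = Γ̃`, so that `H = {z | 2z ∈ Λ}`, and let `ζ` be the Weierstrass zeta function of `Λ`.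
For each of the three half periods `α ∉ Λ`, the function `ζ(z) - ζ(z - α) - ζ(α)` is
`Λ`-periodic because `ζ` is quasi-periodic, has residue `1` on `Λ` and `-1` on `α + Λ`, and is
odd about every point of `H`; oddness forces all its constant Laurent terms on `H` to vanish.
Their residues at the half periods show that these three functions are independent.
Conversely, subtracting the right combination of them from a solution `s` leaves a solution `g`
that tends to `0` at every point of `H \ Λ` and can only have poles on `Λ`. For a half period
`a ∉ Λ`, the poles of `g` are cancelled by the zeros of `g(· + a)` and vice versa, so
`g(z) g(z + a)` extends to a bounded entire function. It vanishes at another half period, hence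
everywhere, and the identity theorem gives `g = 0`.
-/

lemma tendsto_add_right_nhdsNE (c q : ℂ) : Tendsto (· + c) (𝓝[≠] q) (𝓝[≠] (q + c)) := by
  simpa using tendsto_map (f := (· + c)) (x := 𝓝[≠] q)

lemma tendsto_sub_right_nhdsNE (c q : ℂ) : Tendsto (· - c) (𝓝[≠] q) (𝓝[≠] (q - c)) := by
  simpa using tendsto_map (f := (· - c)) (x := 𝓝[≠] q)

lemma tendsto_sub_left_nhdsNE (c q : ℂ) : Tendsto (c - ·) (𝓝[≠] q) (𝓝[≠] (c - q)) := by
  simpa using tendsto_map (f := (c - ·)) (x := 𝓝[≠] q)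

lemma tendsto_sub_mul_of_tendsto_sub_div {f : ℂ → ℂ} {q r : ℂ}
    (h : Tendsto (fun z ↦ f z - r / (z - q)) (𝓝[≠] q) (𝓝 0)) :
    Tendsto (fun z ↦ (z - q) * f z) (𝓝[≠] q) (𝓝 r) := by
  have hsub : Tendsto (fun z ↦ z - q) (𝓝[≠] q) (𝓝 0) :=
    tendsto_nhdsWithin_of_tendsto_nhds (by simpa using (continuous_sub_right q).tendsto q)
  refine ((hsub.mul h).add_const r).congr' ?_ |>.trans_eq (by simp)
  filter_upwards [self_mem_nhdsWithin] with z hz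
  field_simp [sub_ne_zero.2 hz]
  ring

lemma eq_of_tendsto_sub_div {f : ℂ → ℂ} {q r r' : ℂ}
    (h : Tendsto (fun z ↦ f z - r / (z - q)) (𝓝[≠] q) (𝓝 0))
    (h' : Tendsto (fun z ↦ f z - r' / (z - q)) (𝓝[≠] q) (𝓝 0)) : r = r' :=
  tendsto_nhds_unique (tendsto_sub_mul_of_tendsto_sub_div h) (tendsto_sub_mul_of_tendsto_sub_div h')

lemma tendsto_sum_sub_div {ι : Type*} (s : Finset ι) {f : ι → ℂ → ℂ} {r : ι → ℂ} (c : ι → ℂ)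
    {q : ℂ} (h : ∀ i ∈ s, Tendsto (fun z ↦ f i z - r i / (z - q)) (𝓝[≠] q) (𝓝 0)) :
    Tendsto (fun z ↦ ∑ i ∈ s, c i * f i z - (∑ i ∈ s, c i * r i) / (z - q)) (𝓝[≠] q) (𝓝 0) := by
  convert tendsto_finsetSum s fun i hi ↦ (h i hi).const_mul (c i) using 2 with z
  · rw [Finset.sum_div, ← Finset.sum_sub_distrib]
    exact Finset.sum_congr rfl fun i _ ↦ by ring
  · simp

lemma tendsto_mul_of_tendsto_sub_div_of_hasDerivAt {f h : ℂ → ℂ} {q r d : ℂ}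
    (hf : Tendsto (fun z ↦ f z - r / (z - q)) (𝓝[≠] q) (𝓝 0)) (hh : HasDerivAt h d q)
    (hq : h q = 0) : Tendsto (fun z ↦ f z * h z) (𝓝[≠] q) (𝓝 (r * d)) := by
  refine ((tendsto_sub_mul_of_tendsto_sub_div hf).mul
    (hasDerivAt_iff_tendsto_slope.1 hh)).congr' ?_
  filter_upwards [self_mem_nhdsWithin] with z hz
  rw [slope_def_field, hq, sub_zero]
  field_simp [sub_ne_zero.2 hz]

lemma eq_zero_of_tendsto_sub_div_of_odd_about {f : ℂ → ℂ} {q r c : ℂ}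
    (hf : ∀ᶠ z in 𝓝[≠] q, f (2 * q - z) = -f z)
    (h : Tendsto (fun z ↦ f z - r / (z - q)) (𝓝[≠] q) (𝓝 c)) : c = 0 := by
  have hreflect : Tendsto (2 * q - ·) (𝓝[≠] q) (𝓝[≠] q) := by
    simpa [two_mul] using tendsto_sub_left_nhdsNE (2 * q) q
  have hneg : Tendsto (fun z ↦ -(f z - r / (z - q))) (𝓝[≠] q) (𝓝 c) := by
    refine (h.comp hreflect).congr' ?_
    filter_upwards [hf] with z hz
    simp only [Function.comp_apply, hz, show 2 * q - z - q = -(z - q) by ring, div_neg]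
    ring
  have := tendsto_nhds_unique hneg h.neg
  rwa [eq_neg_iff_add_eq_zero, ← two_mul, mul_eq_zero, or_iff_right two_ne_zero] at this

lemma differentiableOn_piecewise_of_tendsto {U S : Set ℂ} {f c : ℂ → ℂ}
    [DecidablePred (· ∈ S)] (hU : IsOpen U) (hS : IsClosed S)
    (hSd : ∀ q ∈ S, ∀ᶠ z in 𝓝[≠] q, z ∉ S) (hf : DifferentiableOn ℂ f (U \ S))
    (hlim : ∀ q ∈ U ∩ S, Tendsto f (𝓝[≠] q) (𝓝 (c q))) :
    DifferentiableOn ℂ (S.piecewise c f) U := by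
  have hoff : ∀ z ∈ U \ S, DifferentiableAt ℂ (S.piecewise c f) z := fun z hz ↦
    (hf.differentiableAt ((hU.sdiff hS).mem_nhds hz)).congr_of_eventuallyEq <| by
      filter_upwards [hS.isOpen_compl.mem_nhds hz.2] with w hw using piecewise_eq_of_notMem _ _ _ hw
  intro z hz
  by_cases hzS : z ∉ S
  · exact (hoff z ⟨hz, hzS⟩).differentiableWithinAt
  rw [not_not] at hzS
  have hnhds : U ∩ {w | w ≠ z → w ∉ S} ∈ 𝓝 z :=
    inter_mem (hU.mem_nhds hz) (eventually_nhdsWithin_iff.1 (hSd z hzS))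
  refine ((Complex.differentiableOn_compl_singleton_and_continuousAt_iff hnhds).1 ⟨fun w hw ↦
    (hoff w ⟨hw.1.1, hw.1.2 hw.2⟩).differentiableWithinAt, ?_⟩).differentiableAt
    hnhds |>.differentiableWithinAt
  rw [continuousAt_iff_punctured_nhds, piecewise_eq_of_mem _ _ _ hzS]
  refine (hlim z ⟨hz, hzS⟩).congr' ?_
  filter_upwards [hSd z hzS] with w hw using (piecewise_eq_of_notMem _ _ _ hw).symm

namespace PeriodPair

variable (L : PeriodPair)

lemma countable_lattice : (L.lattice : Set ℂ).Countable :=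
  Set.countable_coe_iff.mp (countable_of_Lindelof_of_discrete (X := L.lattice))

lemma isPreconnected_compl_lattice : IsPreconnected (L.lattice : Set ℂ)ᶜ :=
  (L.countable_lattice.isConnected_compl_of_one_lt_rank (by simp)).isPreconnected

noncomputable def weierstrassZetaExceptZero (z : ℂ) : ℂ :=
  ∑' l : L.lattice, if (l : ℂ) = 0 then 0 else 1 / (z - l) + 1 / l + z / l ^ 2

noncomputable def weierstrassZeta (z : ℂ) : ℂ := 1 / z + L.weierstrassZetaExceptZero z

lemma weierstrassZeta_summand_bound {r : ℝ} {z l : ℂ} (hz : ‖z‖ < r) (hl : 2 * r ≤ ‖l‖) :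
    ‖1 / (z - l) + 1 / l + z / l ^ 2‖ ≤ 2 * r ^ 2 * ‖l‖ ^ (-3 : ℝ) := by
  have hr : 0 < r := (norm_nonneg z).trans_lt hz
  have hl₀ : 0 < ‖l‖ := by linarith
  have hzl : ‖l‖ / 2 ≤ ‖z - l‖ := by
    rw [norm_sub_rev]
    linarith [norm_sub_norm_le l z]
  have hzl₀ : z - l ≠ 0 := norm_pos_iff.1 (by linarith)
  have hl₀' : l ≠ 0 := norm_pos_iff.1 hl₀
  calc ‖1 / (z - l) + 1 / l + z / l ^ 2‖ = ‖z‖ ^ 2 / (‖l‖ ^ 2 * ‖z - l‖) := by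
        rw [show 1 / (z - l) + 1 / l + z / l ^ 2 = z ^ 2 / (l ^ 2 * (z - l)) by field_simp; ring]
        simp
    _ ≤ r ^ 2 / (‖l‖ ^ 2 * (‖l‖ / 2)) := by gcongr
    _ = 2 * r ^ 2 * ‖l‖ ^ (-3 : ℝ) := by
        rw [Real.rpow_neg hl₀.le]
        norm_cast
        field_simp

lemma hasSumLocallyUniformly_weierstrassZetaExceptZero :
    HasSumLocallyUniformly
      (fun (l : L.lattice) (z : ℂ) ↦ if (l : ℂ) = 0 then 0 else 1 / (z - l) + 1 / l + z / l ^ 2)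
      L.weierstrassZetaExceptZero := by
  refine L.hasSumLocallyUniformly_aux (u := (2 * · ^ 2 * ‖·‖ ^ (-3 : ℝ))) _
    (fun _ _ ↦ (ZLattice.summable_norm_rpow _ _ (by simp; norm_num)).mul_left _) fun r hr ↦
    Filter.eventually_atTop.mpr ⟨2 * r, ?_⟩
  rintro _ h s hs l rfl
  split_ifs
  · simpa using! show 0 ≤ 2 * r ^ 2 * (‖(l : ℂ)‖ ^ 3)⁻¹ by positivity
  · exact weierstrassZeta_summand_bound hs h

lemma differentiableOn_weierstrassZetaExceptZero :
    DifferentiableOn ℂ L.weierstrassZetaExceptZero (L.lattice \ {0})ᶜ := by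
  refine L.hasSumLocallyUniformly_weierstrassZetaExceptZero.hasSumLocallyUniformlyOn
    |>.differentiableOn (.of_forall fun s ↦ .fun_sum fun i hi ↦ ?_) L.isOpen_compl_lattice_sdiff
  split_ifs with h
  · simp
  · refine .add (.add (.div (by fun_prop) (by fun_prop) fun x hx ↦ ?_) (by fun_prop))
      (by fun_prop)
    have : x ≠ i := by rintro rfl; simp_all
    simpa [sub_eq_zero]

lemma hasDerivAt_weierstrassZetaExceptZero {z : ℂ} (hz : z ∈ ((L.lattice : Set ℂ) \ {0})ᶜ) :
    HasDerivAt L.weierstrassZetaExceptZero (-L.weierstrassPExcept 0 z) z := by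
  refine hasDerivAt_of_tendstoLocallyUniformlyOn L.isOpen_compl_lattice_sdiff
    (L.hasSumLocallyUniformly_weierstrassPExcept 0).tendstoLocallyUniformlyOn.neg ?_
    (fun x _ ↦ L.hasSumLocallyUniformly_weierstrassZetaExceptZero.hasSum) hz
  refine .of_forall fun s x hx ↦ ?_
  simp only [Pi.neg_apply, ← Finset.sum_neg_distrib]
  refine HasDerivAt.fun_sum fun l _ ↦ ?_
  split_ifs with hl
  · simpa using hasDerivAt_const x (0 : ℂ)
  have hxl : x - l ≠ 0 := sub_ne_zero.2 fun e ↦ hx ⟨e ▸ l.2, by simpa [e] using hl⟩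
  convert ((((hasDerivAt_id x).sub_const (l : ℂ)).inv hxl).const_mul 1).add_const (1 / (l : ℂ))
    |>.add ((hasDerivAt_id x).div_const ((l : ℂ) ^ 2)) using 1
  · ext; simp [div_eq_mul_inv]
  · simp; ring

lemma hasDerivAt_weierstrassZeta {z : ℂ} (hz : z ∉ L.lattice) :
    HasDerivAt L.weierstrassZeta (-L.weierstrassP z) z := by
  have hz₀ : z ≠ 0 := by rintro rfl; exact hz (zero_mem _)
  have h := (hasDerivAt_inv hz₀).add
    (L.hasDerivAt_weierstrassZetaExceptZero (z := z) (by simp [hz]))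
  rw [show L.weierstrassZeta = (fun y ↦ y⁻¹) + L.weierstrassZetaExceptZero by
    ext; simp [weierstrassZeta]]
  refine h.congr_deriv ?_
  rw [show (0 : ℂ) = ((0 : L.lattice) : ℂ) from rfl, L.weierstrassPExcept_def]
  simp

lemma differentiableOn_weierstrassZeta : DifferentiableOn ℂ L.weierstrassZeta (L.lattice)ᶜ :=
  fun _ hz ↦ (L.hasDerivAt_weierstrassZeta hz).differentiableAt.differentiableWithinAt

lemma weierstrassZetaExceptZero_neg (z : ℂ) :
    L.weierstrassZetaExceptZero (-z) = -L.weierstrassZetaExceptZero z := by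
  simp only [weierstrassZetaExceptZero]
  rw [← (Equiv.neg L.lattice).tsum_eq, ← tsum_neg]
  congr! 2 with l
  simp only [Equiv.neg_apply, NegMemClass.coe_neg, neg_eq_zero,
    show ∀ a b : ℂ, -a - -b = -(a - b) from fun _ _ ↦ by ring, one_div, inv_neg]
  split_ifs
  · simp
  · ring

lemma weierstrassZeta_neg (z : ℂ) : L.weierstrassZeta (-z) = -L.weierstrassZeta z := by
  simp only [weierstrassZeta, weierstrassZetaExceptZero_neg, one_div, inv_neg]
  ring

lemma tendsto_weierstrassZeta_sub_inv :
    Tendsto (fun z ↦ L.weierstrassZeta z - 1 / z) (𝓝 0) (𝓝 0) := by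
  have h := (L.differentiableOn_weierstrassZetaExceptZero.differentiableAt
    (L.isOpen_compl_lattice_sdiff.mem_nhds fun h ↦ h.2 rfl)).continuousAt.tendsto
  rw [show L.weierstrassZetaExceptZero 0 = 0 by simp [weierstrassZetaExceptZero]] at h
  exact h.congr fun z ↦ by simp [weierstrassZeta]

lemma exists_weierstrassZeta_add_eq {l : ℂ} (hl : l ∈ L.lattice) :
    ∃ η, ∀ z ∉ L.lattice, L.weierstrassZeta (z + l) = L.weierstrassZeta z + η := by
  have hshift : ∀ z ∉ L.lattice, z + l ∉ L.lattice := fun z hz h ↦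
    hz (by simpa using sub_mem h hl)
  refine L.isClosed_lattice.isOpen_compl.exists_eq_add_of_deriv_eq L.isPreconnected_compl_lattice
    (fun z hz ↦ ((L.hasDerivAt_weierstrassZeta (hshift z hz)).comp_add_const z l).differentiableAt
      |>.differentiableWithinAt)
    L.differentiableOn_weierstrassZeta fun z hz ↦ ?_
  rw [deriv_comp_add_const, (L.hasDerivAt_weierstrassZeta (hshift z hz)).deriv,
    (L.hasDerivAt_weierstrassZeta hz).deriv, L.weierstrassP_add_coe z ⟨l, hl⟩]

def halfLattice : Set ℂ := {z | 2 * z ∈ L.lattice}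

lemma isClosed_halfLattice : IsClosed L.halfLattice :=
  L.isClosed_lattice.preimage (continuous_const_mul 2)

lemma countable_halfLattice : L.halfLattice.Countable :=
  L.countable_lattice.preimage (mul_right_injective₀ two_ne_zero)

lemma isPreconnected_compl_halfLattice : IsPreconnected L.halfLatticeᶜ :=
  (L.countable_halfLattice.isConnected_compl_of_one_lt_rank (by simp)).isPreconnected

lemma eventually_notMem_halfLattice (q : ℂ) : ∀ᶠ z in 𝓝[≠] q, z ∉ L.halfLattice := by
  have h := (continuous_const_mul (2 : ℂ)).continuousAt.preimage_mem_nhds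
    (L.compl_lattice_sdiff_singleton_mem_nhds (2 * q))
  filter_upwards [nhdsWithin_le_nhds h, self_mem_nhdsWithin] with z hz hzq hmem
  exact hz ⟨hmem, fun h ↦ hzq (mul_left_cancel₀ two_ne_zero h)⟩

variable {L}

lemma mem_halfLattice_of_mem {z : ℂ} (hz : z ∈ L.lattice) : z ∈ L.halfLattice := by
  simpa [halfLattice, two_mul] using add_mem hz hz

lemma notMem_lattice_of_notMem_halfLattice {z : ℂ} (hz : z ∉ L.halfLattice) : z ∉ L.lattice :=
  fun h ↦ hz (mem_halfLattice_of_mem h)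

lemma add_mem_halfLattice {z w : ℂ} (hz : z ∈ L.halfLattice) (hw : w ∈ L.halfLattice) :
    z + w ∈ L.halfLattice := by
  show 2 * (z + w) ∈ L.lattice
  rw [mul_add]
  exact add_mem hz hw

lemma add_mem_halfLattice_iff {z l : ℂ} (hl : l ∈ L.lattice) :
    z + l ∈ L.halfLattice ↔ z ∈ L.halfLattice :=
  ⟨fun h ↦ by simpa using add_mem_halfLattice h (mem_halfLattice_of_mem (neg_mem hl)),
    fun h ↦ add_mem_halfLattice h (mem_halfLattice_of_mem hl)⟩

lemma neg_mem_halfLattice_iff {z : ℂ} : -z ∈ L.halfLattice ↔ z ∈ L.halfLattice := by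
  simp [halfLattice]

lemma sub_notMem_lattice_of_notMem_halfLattice {α z : ℂ} (hαH : α ∈ L.halfLattice)
    (hz : z ∉ L.halfLattice) : z - α ∉ L.lattice := fun h ↦
  hz (by simpa using (add_mem_halfLattice_iff h).2 hαH)

lemma add_notMem_halfLattice {α z : ℂ} (hαH : α ∈ L.halfLattice) (hz : z ∉ L.halfLattice) :
    z + α ∉ L.halfLattice := fun h ↦
  hz (by simpa using add_mem_halfLattice h (neg_mem_halfLattice_iff.2 hαH))

-- `ω₁ / 2`, `ω₂ / 2` and `(ω₁ + ω₂) / 2`, with integer coefficients so that lattice membership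
-- of their differences reduces to parity.
variable (L) in
noncomputable def halfPeriod (i : Fin 3) : ℂ :=
  (((![1, 0, 1] : Fin 3 → ℤ) i : ℂ) * L.ω₁ + ((![0, 1, 1] : Fin 3 → ℤ) i : ℂ) * L.ω₂) / 2

lemma div_two_mem_lattice_iff (m n : ℤ) :
    ((m : ℂ) * L.ω₁ + n * L.ω₂) / 2 ∈ L.lattice ↔ Even m ∧ Even n := by
  rw [show ((m : ℂ) * L.ω₁ + n * L.ω₂) / 2 = (((m : ℚ) / (2 : ℤ) : ℚ) : ℂ) * L.ω₁ +
      (((n : ℚ) / (2 : ℤ) : ℚ) : ℂ) * L.ω₂ by push_cast; ring, mul_ω₁_add_mul_ω₂_mem_lattice,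
    Rat.den_div_intCast_eq_one_iff _ _ two_ne_zero, Rat.den_div_intCast_eq_one_iff _ _ two_ne_zero,
    even_iff_two_dvd, even_iff_two_dvd]

lemma halfPeriod_sub_mem_lattice_iff {i j : Fin 3} :
    L.halfPeriod i - L.halfPeriod j ∈ L.lattice ↔ i = j := by
  rw [halfPeriod, halfPeriod, ← sub_div, show ∀ a b c d : ℤ, (a * L.ω₁ + b * L.ω₂ : ℂ) -
    (c * L.ω₁ + d * L.ω₂) = ((a - c : ℤ) : ℂ) * L.ω₁ + ((b - d : ℤ) : ℂ) * L.ω₂ from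
    fun _ _ _ _ ↦ by push_cast; ring, div_two_mem_lattice_iff]
  fin_cases i <;> fin_cases j <;> decide

lemma halfPeriod_notMem_lattice (i : Fin 3) : L.halfPeriod i ∉ L.lattice := by
  rw [halfPeriod, div_two_mem_lattice_iff]
  fin_cases i <;> decide

lemma halfPeriod_mem_halfLattice (i : Fin 3) : L.halfPeriod i ∈ L.halfLattice := by
  show 2 * L.halfPeriod i ∈ L.lattice
  rw [halfPeriod, mul_div_cancel₀ _ two_ne_zero]
  exact mem_lattice.2 ⟨_, _, rfl⟩

lemma halfPeriod_one_add_halfPeriod_zero : L.halfPeriod 1 + L.halfPeriod 0 = L.halfPeriod 2 := by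
  simp [halfPeriod]
  ring

lemma mem_halfLattice_iff {q : ℂ} :
    q ∈ L.halfLattice ↔ q ∈ L.lattice ∨ ∃ i, q - L.halfPeriod i ∈ L.lattice := by
  refine ⟨fun hq ↦ ?_, ?_⟩
  · obtain ⟨m, n, hmn⟩ := mem_lattice.1 hq
    have hq' : q = ((m : ℂ) * L.ω₁ + n * L.ω₂) / 2 := by rw [hmn]; ring
    have hsub : ∀ i, q - L.halfPeriod i ∈ L.lattice ↔
        Even (m - (![1, 0, 1] : Fin 3 → ℤ) i) ∧ Even (n - (![0, 1, 1] : Fin 3 → ℤ) i) := by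
      intro i
      rw [hq', halfPeriod, ← sub_div, ← div_two_mem_lattice_iff]
      push_cast
      ring_nf
    simp only [hsub]
    rw [hq', div_two_mem_lattice_iff]
    rcases Int.even_or_odd m with hm | hm <;> rcases Int.even_or_odd n with hn | hn <;>
      simp [Fin.exists_fin_succ, Int.even_sub, hm, hn, Int.not_even_iff_odd]
  · rintro (hq | ⟨i, hi⟩)
    · exact mem_halfLattice_of_mem hq
    · simpa using (add_mem_halfLattice_iff hi).2 (halfPeriod_mem_halfLattice i)

lemma exists_tendsto_weierstrassZeta_sub_indicator (q : ℂ) :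
    ∃ c, Tendsto (fun z ↦ L.weierstrassZeta z - (L.lattice : Set ℂ).indicator 1 q / (z - q))
      (𝓝[≠] q) (𝓝 c) := by
  by_cases hq : q ∈ L.lattice
  · obtain ⟨η, hη⟩ := L.exists_weierstrassZeta_add_eq hq
    refine ⟨0 + η, ?_⟩
    have h := L.tendsto_weierstrassZeta_sub_inv.comp
      ((tendsto_sub_right_nhdsNE q q).mono_right nhdsWithin_le_nhds |>.trans_eq (by rw [sub_self]))
    refine (h.add_const η).congr' ?_
    filter_upwards [L.eventually_notMem_halfLattice q] with z hz
    have hzq := hη _ (sub_notMem_lattice_of_notMem_halfLattice (mem_halfLattice_of_mem hq) hz)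
    rw [sub_add_cancel] at hzq
    simp [hq, hzq]
    ring
  · refine ⟨L.weierstrassZeta q, ?_⟩
    simpa [hq] using ((L.hasDerivAt_weierstrassZeta hq).continuousAt.tendsto).mono_left
      nhdsWithin_le_nhds

variable (L) in
noncomputable def zetaDiff (α z : ℂ) : ℂ :=
  L.weierstrassZeta z - L.weierstrassZeta (z - α) - L.weierstrassZeta α

lemma differentiableAt_zetaDiff {α z : ℂ} (hz : z ∉ L.lattice) (hzα : z - α ∉ L.lattice) :
    DifferentiableAt ℂ (L.zetaDiff α) z :=
  (((L.hasDerivAt_weierstrassZeta hz).differentiableAt).sub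
    ((L.hasDerivAt_weierstrassZeta hzα).differentiableAt.comp z
      (differentiableAt_id.sub_const α))).sub_const _

lemma zetaDiff_add_of_mem {α z l : ℂ} (hz : z ∉ L.lattice) (hzα : z - α ∉ L.lattice)
    (hl : l ∈ L.lattice) : L.zetaDiff α (z + l) = L.zetaDiff α z := by
  obtain ⟨η, hη⟩ := L.exists_weierstrassZeta_add_eq hl
  simp only [zetaDiff, hη z hz, show z + l - α = z - α + l by ring, hη _ hzα]
  ring

lemma weierstrassZeta_add_two_mul {α z : ℂ} (hαH : α ∈ L.halfLattice) (hαΛ : α ∉ L.lattice)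
    (hz : z ∉ L.lattice) :
    L.weierstrassZeta (z + 2 * α) = L.weierstrassZeta z + 2 * L.weierstrassZeta α := by
  obtain ⟨η, hη⟩ := L.exists_weierstrassZeta_add_eq hαH
  have hη' := hη (-α) (by simpa using hαΛ)
  rw [show -α + 2 * α = α by ring, weierstrassZeta_neg] at hη'
  rw [hη z hz]
  linear_combination -hη'

lemma zetaDiff_neg {α z : ℂ} (hαH : α ∈ L.halfLattice) (hαΛ : α ∉ L.lattice)
    (hzα : z - α ∉ L.lattice) : L.zetaDiff α (-z) = -L.zetaDiff α z := by
  have h := weierstrassZeta_add_two_mul hαH hαΛ hzα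
  rw [show z - α + 2 * α = -(-z - α) by ring, weierstrassZeta_neg] at h
  simp only [zetaDiff, weierstrassZeta_neg]
  linear_combination h

lemma zetaDiff_two_mul_sub {α q z : ℂ} (hαH : α ∈ L.halfLattice) (hαΛ : α ∉ L.lattice)
    (hq : q ∈ L.halfLattice) (hz : z ∉ L.halfLattice) :
    L.zetaDiff α (2 * q - z) = -L.zetaDiff α z := by
  have hz' : -z ∉ L.halfLattice := by rwa [neg_mem_halfLattice_iff]
  rw [sub_eq_neg_add, zetaDiff_add_of_mem (notMem_lattice_of_notMem_halfLattice hz')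
    (sub_notMem_lattice_of_notMem_halfLattice hαH hz') hq,
    zetaDiff_neg hαH hαΛ (sub_notMem_lattice_of_notMem_halfLattice hαH hz)]

lemma tendsto_zetaDiff_sub {α q : ℂ} (hαH : α ∈ L.halfLattice) (hαΛ : α ∉ L.lattice)
    (hq : q ∈ L.halfLattice) :
    Tendsto (fun z ↦ L.zetaDiff α z - ((L.lattice : Set ℂ).indicator 1 q -
      (L.lattice : Set ℂ).indicator 1 (q - α)) / (z - q)) (𝓝[≠] q) (𝓝 0) := by
  obtain ⟨c₁, h₁⟩ := L.exists_tendsto_weierstrassZeta_sub_indicator q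
  obtain ⟨c₂, h₂⟩ := L.exists_tendsto_weierstrassZeta_sub_indicator (q - α)
  have hlim : Tendsto (fun z ↦ L.zetaDiff α z - ((L.lattice : Set ℂ).indicator 1 q -
      (L.lattice : Set ℂ).indicator 1 (q - α)) / (z - q)) (𝓝[≠] q)
      (𝓝 (c₁ - c₂ - L.weierstrassZeta α)) := by
    refine ((h₁.sub (h₂.comp (tendsto_sub_right_nhdsNE α q))).sub_const _).congr fun z ↦ ?_
    simp only [Function.comp_apply, zetaDiff, sub_sub_sub_cancel_right]
    ring
  have hodd : ∀ᶠ z in 𝓝[≠] q, L.zetaDiff α (2 * q - z) = -L.zetaDiff α z := by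
    filter_upwards [L.eventually_notMem_halfLattice q] with z hz
    exact zetaDiff_two_mul_sub hαH hαΛ hq hz
  rwa [eq_zero_of_tendsto_sub_div_of_odd_about hodd hlim] at hlim

lemma tendsto_zetaDiff_halfPeriod (i j : Fin 3) :
    Tendsto (fun z ↦ L.zetaDiff (L.halfPeriod i) z -
      (if i = j then -1 else 0) / (z - L.halfPeriod j)) (𝓝[≠] (L.halfPeriod j)) (𝓝 0) := by
  convert tendsto_zetaDiff_sub (halfPeriod_mem_halfLattice i) (halfPeriod_notMem_lattice i)
    (halfPeriod_mem_halfLattice j) using 5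
  classical
  simp only [Set.indicator_apply, SetLike.mem_coe, halfPeriod_notMem_lattice,
    halfPeriod_sub_mem_lattice_iff, eq_comm (a := j), if_false]
  split_ifs <;> simp

lemma tendsto_sub_div_add_of_periodic {s : ℂ → ℂ}
    (hper : ∀ z ∉ L.halfLattice, ∀ γ ∈ L.lattice, s (z + γ) = s z) {q l r c : ℂ}
    (hl : l ∈ L.lattice) (h : Tendsto (fun z ↦ s z - r / (z - q)) (𝓝[≠] q) (𝓝 c)) :
    Tendsto (fun z ↦ s z - r / (z - (q + l))) (𝓝[≠] (q + l)) (𝓝 c) := by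
  have hshift := tendsto_sub_right_nhdsNE l (q + l)
  rw [add_sub_cancel_right] at hshift
  refine (h.comp hshift).congr' ?_
  filter_upwards [L.eventually_notMem_halfLattice (q + l)] with z hz
  have hz' : z - l ∉ L.halfLattice := by rwa [← add_mem_halfLattice_iff hl, sub_add_cancel]
  simp only [Function.comp_apply, ← hper _ hz' l hl, sub_add_cancel, sub_sub, add_comm l q]

variable (L) in
def trivialSpinSpace : Submodule ℂ (ℂ → ℂ) where
  carrier := {s | DifferentiableOn ℂ s L.halfLatticeᶜ ∧
    (∀ z ∉ L.halfLattice, ∀ γ ∈ L.lattice, s (z + γ) = s z) ∧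
    ∀ q ∈ L.halfLattice, ∃ r : ℂ, Tendsto (fun z ↦ s z - r / (z - q)) (𝓝[≠] q) (𝓝 0)}
  zero_mem' := ⟨differentiableOn_const 0, fun _ _ _ _ ↦ rfl, fun _ _ ↦ ⟨0, by simp⟩⟩
  add_mem' := by
    rintro f g ⟨hf, hfper, hfpole⟩ ⟨hg, hgper, hgpole⟩
    refine ⟨hf.add hg, fun z hz γ hγ ↦ by simp [hfper z hz γ hγ, hgper z hz γ hγ], fun q hq ↦ ?_⟩
    obtain ⟨r, hr⟩ := hfpole q hq
    obtain ⟨r', hr'⟩ := hgpole q hq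
    refine ⟨r + r', ?_⟩
    convert hr.add hr' using 2 with z
    · simp only [Pi.add_apply]
      ring
    · simp
  smul_mem' := by
    rintro c f ⟨hf, hfper, hfpole⟩
    refine ⟨hf.const_smul c, fun z hz γ hγ ↦ by simp [hfper z hz γ hγ], fun q hq ↦ ?_⟩
    obtain ⟨r, hr⟩ := hfpole q hq
    refine ⟨c * r, ?_⟩
    convert hr.const_mul c using 2 with z
    · simp only [Pi.smul_apply, smul_eq_mul]
      ring
    · simp

lemma zetaDiff_mem_trivialSpinSpace {α : ℂ} (hαH : α ∈ L.halfLattice) (hαΛ : α ∉ L.lattice) :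
    L.zetaDiff α ∈ L.trivialSpinSpace :=
  ⟨fun _ hz ↦ (differentiableAt_zetaDiff (notMem_lattice_of_notMem_halfLattice hz)
      (sub_notMem_lattice_of_notMem_halfLattice hαH hz)).differentiableWithinAt,
    fun _ hz _ hγ ↦ zetaDiff_add_of_mem (notMem_lattice_of_notMem_halfLattice hz)
      (sub_notMem_lattice_of_notMem_halfLattice hαH hz) hγ,
    fun _ hq ↦ ⟨_, tendsto_zetaDiff_sub hαH hαΛ hq⟩⟩

lemma eq_zero_of_sum_zetaDiff_halfPeriod_eq_zero {c : Fin 3 → ℂ}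
    (h : ∀ z ∉ L.halfLattice, ∑ i, c i * L.zetaDiff (L.halfPeriod i) z = 0) : c = 0 := by
  funext j
  have hres := tendsto_sum_sub_div Finset.univ c fun i _ ↦ tendsto_zetaDiff_halfPeriod (L := L) i j
  have hzero : Tendsto (fun z ↦ ∑ i, c i * L.zetaDiff (L.halfPeriod i) z - 0 / (z - L.halfPeriod j))
      (𝓝[≠] (L.halfPeriod j)) (𝓝 0) := by
    refine tendsto_const_nhds.congr' ?_
    filter_upwards [L.eventually_notMem_halfLattice (L.halfPeriod j)] with z hz
    simp [h z hz]
  simpa using eq_of_tendsto_sub_div hres hzero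

lemma exists_tendsto_mul_comp_add_halfPeriod {G : ℂ → ℂ}
    (hG : DifferentiableOn ℂ G (L.lattice : Set ℂ)ᶜ)
    (hG₀ : ∀ q ∈ L.halfLattice, q ∉ L.lattice → G q = 0)
    (hpole : ∀ q ∈ L.lattice, ∃ ρ, Tendsto (fun z ↦ G z - ρ / (z - q)) (𝓝[≠] q) (𝓝 0))
    {q : ℂ} (hq : q ∈ L.halfLattice) :
    ∃ c, Tendsto (fun z ↦ G z * G (z + L.halfPeriod 0)) (𝓝[≠] q) (𝓝 c) := by
  set a := L.halfPeriod 0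
  have hGd : ∀ w ∉ L.lattice, HasDerivAt G (deriv G w) w := fun w hw ↦
    (hG.differentiableAt (L.isClosed_lattice.isOpen_compl.mem_nhds hw)).hasDerivAt
  have ha : a ∉ L.lattice := halfPeriod_notMem_lattice 0
  have hqa : q + a ∈ L.halfLattice := add_mem_halfLattice hq (halfPeriod_mem_halfLattice 0)
  by_cases hq₁ : q ∈ L.lattice
  · obtain ⟨ρ, hρ⟩ := hpole q hq₁
    have hqa' : q + a ∉ L.lattice := fun h ↦ ha (by simpa using sub_mem h hq₁)
    exact ⟨_, tendsto_mul_of_tendsto_sub_div_of_hasDerivAt hρ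
      ((hGd _ hqa').comp_add_const q a) (hG₀ _ hqa hqa')⟩
  by_cases hq₂ : q + a ∈ L.lattice
  · obtain ⟨ρ, hρ⟩ := hpole _ hq₂
    have hρ' : Tendsto (fun z ↦ G (z + a) - ρ / (z - q)) (𝓝[≠] q) (𝓝 0) :=
      (hρ.comp (tendsto_add_right_nhdsNE a q)).congr fun z ↦ by simp
    exact ⟨_, (tendsto_mul_of_tendsto_sub_div_of_hasDerivAt hρ' (hGd q hq₁)
      (hG₀ q hq hq₁)).congr fun z ↦ mul_comm _ _⟩
  · exact ⟨_, (((hGd q hq₁).continuousAt.mul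
      ((hGd _ hq₂).comp_add_const q a).continuousAt).tendsto).mono_left nhdsWithin_le_nhds⟩

lemma eq_zero_of_periodic_of_tendsto {P : ℂ → ℂ} (hP : DifferentiableOn ℂ P L.halfLatticeᶜ)
    (hper : ∀ z ∉ L.halfLattice, ∀ l ∈ L.lattice, P (z + l) = P z)
    (hlim : ∀ q ∈ L.halfLattice, ∃ c, Tendsto P (𝓝[≠] q) (𝓝 c)) {q₀ : ℂ}
    (hq₀ : q₀ ∈ L.halfLattice) (h₀ : Tendsto P (𝓝[≠] q₀) (𝓝 0)) {z : ℂ}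
    (hz : z ∉ L.halfLattice) : P z = 0 := by
  classical
  set F := L.halfLattice.piecewise (fun q ↦ limUnder (𝓝[≠] q) P) P
  have hFd : Differentiable ℂ F := fun w ↦ (differentiableOn_piecewise_of_tendsto isOpen_univ
    L.isClosed_halfLattice (fun q _ ↦ L.eventually_notMem_halfLattice q)
    (hP.mono fun _ hw ↦ hw.2) (fun q hq ↦ tendsto_nhds_limUnder (hlim q hq.2))
    w (mem_univ w)).differentiableAt univ_mem
  have hFP : ∀ w ∉ L.halfLattice, F w = P w := fun w hw ↦ piecewise_eq_of_notMem _ _ _ hw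
  have hFper : ∀ w, ∀ l ∈ L.lattice, F (w + l) = F w := fun w l hl ↦ congr_fun
    (Continuous.ext_on (L.countable_halfLattice.dense_compl ℂ)
      (hFd.continuous.comp (continuous_add_const l)) hFd.continuous fun u hu ↦ by
        simp only [Function.comp_apply, hFP _ ((add_mem_halfLattice_iff hl).not.2 hu), hFP u hu,
          hper u hu l hl]) w
  have hF₀ : F q₀ = 0 := (piecewise_eq_of_mem _ _ _ hq₀).trans h₀.limUnder_eq
  rw [← hFP z hz, hFd.apply_eq_apply_of_bounded (IsZLattice.isCompact_range_of_periodic L.lattice F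
    hFd.continuous hFper).isBounded z q₀, hF₀]

lemma mul_comp_add_halfPeriod_eq_zero {g G : ℂ → ℂ} (hg : g ∈ L.trivialSpinSpace)
    (hG : DifferentiableOn ℂ G (L.lattice : Set ℂ)ᶜ)
    (hG₀ : ∀ q ∈ L.halfLattice, q ∉ L.lattice → G q = 0) (hGg : EqOn G g L.halfLatticeᶜ)
    {z : ℂ} (hz : z ∉ L.halfLattice) : g z * g (z + L.halfPeriod 0) = 0 := by
  obtain ⟨-, hper, hpole⟩ := hg
  set a := L.halfPeriod 0
  have hGd : ∀ w ∉ L.lattice, DifferentiableAt ℂ G w := fun w hw ↦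
    hG.differentiableAt (L.isClosed_lattice.isOpen_compl.mem_nhds hw)
  have hpoleG : ∀ q ∈ L.lattice, ∃ ρ, Tendsto (fun z ↦ G z - ρ / (z - q)) (𝓝[≠] q) (𝓝 0) := by
    intro q hq
    obtain ⟨ρ, hρ⟩ := hpole q (mem_halfLattice_of_mem hq)
    refine ⟨ρ, hρ.congr' ?_⟩
    filter_upwards [L.eventually_notMem_halfLattice q] with w hw
    rw [hGg hw]
  have hshift : ∀ w ∉ L.halfLattice, w + a ∉ L.halfLattice := fun w ↦
    add_notMem_halfLattice (halfPeriod_mem_halfLattice 0)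
  have hGg' : ∀ w ∉ L.halfLattice, G w * G (w + a) = g w * g (w + a) := fun w hw ↦ by
    rw [hGg hw, hGg (hshift w hw)]
  have h₁ := halfPeriod_notMem_lattice (L := L) 1
  have h₂ : L.halfPeriod 1 + a ∉ L.lattice := by
    rw [halfPeriod_one_add_halfPeriod_zero]
    exact halfPeriod_notMem_lattice 2
  rw [← hGg' z hz]
  refine eq_zero_of_periodic_of_tendsto (fun w hw ↦ ?_) (fun w hw l hl ↦ ?_)
    (fun q hq ↦ exists_tendsto_mul_comp_add_halfPeriod hG hG₀ hpoleG hq)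
    (halfPeriod_mem_halfLattice 1) ?_ hz
  · exact ((hGd w (notMem_lattice_of_notMem_halfLattice hw)).mul ((hGd _
      (notMem_lattice_of_notMem_halfLattice (hshift w hw))).comp w
      (differentiableAt_id.add_const a))).differentiableWithinAt
  · rw [hGg' w hw, hGg' _ ((add_mem_halfLattice_iff hl).not.2 hw), hper w hw l hl,
      add_right_comm, hper _ (hshift w hw) l hl]
  · have hP : Tendsto (fun w ↦ G w * G (w + a)) (𝓝[≠] (L.halfPeriod 1))
        (𝓝 (G (L.halfPeriod 1) * G (L.halfPeriod 1 + a))) :=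
      ((hGd _ h₁).continuousAt.mul ((hGd _ h₂).hasDerivAt.comp_add_const _ a).continuousAt)
        |>.tendsto.mono_left nhdsWithin_le_nhds
    rwa [hG₀ _ (halfPeriod_mem_halfLattice 1) h₁, zero_mul] at hP

theorem eq_zero_of_tendsto_halfPeriod {g : ℂ → ℂ} (hg : g ∈ L.trivialSpinSpace)
    (h₀ : ∀ i, Tendsto g (𝓝[≠] (L.halfPeriod i)) (𝓝 0)) : ∀ z ∉ L.halfLattice, g z = 0 := by
  obtain ⟨hgd, hper, -⟩ := id hg
  have hvan : ∀ q ∈ L.halfLattice, q ∉ L.lattice → Tendsto g (𝓝[≠] q) (𝓝 0) := by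
    intro q hq hqΛ
    obtain ⟨i, hi⟩ := (mem_halfLattice_iff.1 hq).resolve_left hqΛ
    have h := tendsto_sub_div_add_of_periodic hper hi (r := 0) (by simpa using h₀ i)
    rw [add_sub_cancel] at h
    simpa using h
  classical
  have hG := differentiableOn_piecewise_of_tendsto (c := 0) L.isClosed_lattice.isOpen_compl
    L.isClosed_halfLattice (fun q _ ↦ L.eventually_notMem_halfLattice q)
    (hgd.mono fun _ hz ↦ hz.2) (fun q hq ↦ hvan q hq.2 hq.1)
  set a := L.halfPeriod 0
  have hprod : ∀ z ∈ L.halfLatticeᶜ, g z * g (z + a) = 0 := fun z hz ↦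
    mul_comp_add_halfPeriod_eq_zero hg hG (fun q hq _ ↦ piecewise_eq_of_mem _ _ _ hq)
      (fun w hw ↦ piecewise_eq_of_notMem _ _ _ hw) hz
  have hopen := L.isClosed_halfLattice.isOpen_compl
  rcases AnalyticOnNhd.eq_zero_or_eq_zero_of_mul_eq_zero (hgd.analyticOnNhd hopen)
    ((hgd.comp (differentiableOn_id.add_const a)
      fun _ ↦ add_notMem_halfLattice (halfPeriod_mem_halfLattice 0)).analyticOnNhd hopen)
    hprod L.isPreconnected_compl_halfLattice with h | h
  · exact h
  · intro z hz
    have hza : z - a ∉ L.halfLattice := by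
      simpa [sub_eq_add_neg] using
        add_notMem_halfLattice (neg_mem_halfLattice_iff.2 (halfPeriod_mem_halfLattice 0)) hz
    simpa using h (z - a) hza

theorem exists_eq_sum_zetaDiff_halfPeriod {s : ℂ → ℂ} (hs : s ∈ L.trivialSpinSpace) :
    ∃ c : Fin 3 → ℂ, ∀ z ∉ L.halfLattice, s z = ∑ i, c i * L.zetaDiff (L.halfPeriod i) z := by
  choose r hr using fun i ↦ hs.2.2 _ (halfPeriod_mem_halfLattice (L := L) i)
  have hg : s + ∑ i, r i • L.zetaDiff (L.halfPeriod i) ∈ L.trivialSpinSpace :=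
    add_mem hs (sum_mem fun i _ ↦ Submodule.smul_mem _ _ (zetaDiff_mem_trivialSpinSpace
      (halfPeriod_mem_halfLattice i) (halfPeriod_notMem_lattice i)))
  have h₀ : ∀ j, Tendsto (s + ∑ i, r i • L.zetaDiff (L.halfPeriod i)) (𝓝[≠] (L.halfPeriod j))
      (𝓝 0) := fun j ↦ by
    convert (hr j).add (tendsto_sum_sub_div Finset.univ r fun i _ ↦
      tendsto_zetaDiff_halfPeriod (L := L) i j) using 2 with w
    · simp [Finset.sum_apply]
      ring
    · simp
  refine ⟨-r, fun z hz ↦ ?_⟩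
  have := eq_zero_of_tendsto_halfPeriod hg h₀ z hz
  simp only [Pi.add_apply, Finset.sum_apply, Pi.smul_apply, smul_eq_mul] at this
  simp only [Pi.neg_apply, neg_mul, Finset.sum_neg_distrib]
  linear_combination this

end PeriodPair

lemma linearIndependent_four_mul {ω₁ ω₃ : ℂ} (hind : LinearIndependent ℝ ![ω₁, ω₃]) :
    LinearIndependent ℝ ![4 * ω₁, 4 * ω₃] := by
  refine LinearIndependent.pair_iff.2 fun s t hst ↦ ?_
  have := LinearIndependent.pair_iff.1 hind (4 * s) (4 * t) <| by
    rw [← hst]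
    simp only [Complex.real_smul]
    push_cast
    ring
  exact ⟨by linarith [this.1], by linarith [this.2]⟩

def torusPeriodPair {ω₁ ω₃ : ℂ} (hind : LinearIndependent ℝ ![ω₁, ω₃]) : PeriodPair :=
  ⟨4 * ω₁, 4 * ω₃, linearIndependent_four_mul hind⟩

lemma lat4_eq_lattice {ω₁ ω₃ : ℂ} (hind : LinearIndependent ℝ ![ω₁, ω₃]) :
    lat4 ω₁ ω₃ = (torusPeriodPair hind).lattice := by
  ext z
  simp only [lat4, SetLike.mem_coe, PeriodPair.mem_lattice, torusPeriodPair, mem_ofPred_eq]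
  exact ⟨fun ⟨m, n, h⟩ ↦ ⟨m, n, by rw [h]; ring⟩, fun ⟨m, n, h⟩ ↦ ⟨m, n, by rw [← h]; ring⟩⟩

lemma Hset_eq_halfLattice {ω₁ ω₃ : ℂ} (hind : LinearIndependent ℝ ![ω₁, ω₃]) :
    Hset ω₁ ω₃ = (torusPeriodPair hind).halfLattice := by
  have hα : (torusPeriodPair hind).halfPeriod = ![2 * ω₁, 2 * ω₃, 2 * ω₁ + 2 * ω₃] := by
    ext i
    fin_cases i <;> simp [PeriodPair.halfPeriod, torusPeriodPair] <;> ring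
  ext z
  rw [PeriodPair.mem_halfLattice_iff]
  simp only [← SetLike.mem_coe, ← lat4_eq_lattice hind, hα, Hset, mem_union, image_add_left,
    mem_preimage, neg_add_eq_sub]
  simp [Fin.exists_fin_succ]
  tauto

lemma condEleven_iff {ω₁ ω₃ : ℂ} (hind : LinearIndependent ℝ ![ω₁, ω₃]) {s : ℂ → ℂ} :
    CondEleven ω₁ ω₃ s ↔ s ∈ (torusPeriodPair hind).trivialSpinSpace := by
  rw [CondEleven, Hset_eq_halfLattice hind, lat4_eq_lattice hind]
  rfl

/-- The space of `Γ̃`-periodic functions with at most simple poles with vanishing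
constant Laurent terms at the half-period set `H` has complex dimension 3. -/
theorem four_ends_trivial_spin_space_dim_three
    (ω₁ ω₃ : ℂ) (hind : LinearIndependent ℝ ![ω₁, ω₃]) :
    ∃ b : Fin 3 → ℂ → ℂ,
      (∀ i, CondEleven ω₁ ω₃ (b i)) ∧
      (∀ c : Fin 3 → ℂ, (∀ z ∉ Hset ω₁ ω₃, ∑ i, c i * b i z = 0) → c = 0) ∧
      (∀ s : ℂ → ℂ, CondEleven ω₁ ω₃ s →
        ∃ c : Fin 3 → ℂ, ∀ z ∉ Hset ω₁ ω₃, s z = ∑ i, c i * b i z) := by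
  set L := torusPeriodPair hind
  simp only [condEleven_iff hind, Hset_eq_halfLattice hind]
  exact ⟨fun i ↦ L.zetaDiff (L.halfPeriod i),
    fun i ↦ PeriodPair.zetaDiff_mem_trivialSpinSpace (PeriodPair.halfPeriod_mem_halfLattice i)
      (PeriodPair.halfPeriod_notMem_lattice i),
    fun _ ↦ PeriodPair.eq_zero_of_sum_zetaDiff_halfPeriod_eq_zero,
    fun _ ↦ PeriodPair.exists_eq_sum_zetaDiff_halfPeriod⟩
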